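/- For every s ∈ ℝ and x ∈ M, the function t ↦ ν_x^{s,t} from (s, ∞) to ℕ ∪ {∞} is nondecreasing and left-continuous. -/

import Mathlib

/-!
Restriction from `[a, u]` to `[a, t]` maps `K^{a,u}_x` onto `K^{a,t}_x`: the sets `K^{a,u}_{ε,x}`
are compact by the compactness axiom of the skeleton, so the fibres over a point of `K^{a,t}_x`
form a decreasing family of nonempty compact sets. This gives monotonicity. For left-continuity,
every element `g` of `K^{a,t}_x` is the limit of its restrictions to `[a, r]` as `r → t`, so
finitely many distinct elements of `K^{a,t}_x` stay distinct after restriction to `[a, r]` for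
`r` close to `t`.
-/

open Set Filter

noncomputable section

variable {M : Type*} [MetricSpace M] [ProperSpace M] [TopologicalSpace.SeparableSpace M]

/-- The restriction of `f` to `[a, b]`, represented as the element
`t ↦ f(a ∨ (b ∧ t))` of `C(ℝ, M)`. -/
def truncPath (f : C(ℝ, M)) (a b : ℝ) : C(ℝ, M) :=
  f.comp ⟨fun t => max a (min b t),
    continuous_const.max (continuous_const.min continuous_id)⟩

/-- The restriction of a path as an element of the path space (pair of a starting time and
its constant-before extension). -/
def restrictPath (f : C(ℝ, M)) (r : ℝ) : ℝ × C(ℝ, M) :=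
  (r, f.comp ⟨fun t => max r t, continuous_const.max continuous_id⟩)

variable (s : ℕ → ℝ) (φ : ℕ → C(ℝ, M))

/-- `K^{a,b}_{ε,x}`: the closure in `C([a,b] : M)` of the set of restrictions
`{φ_n[a,b] : n ∈ I^a, φ_n(a) ∈ B(x,ε)}`. -/
def Keps (a b : ℝ) (x : M) (ε : ℝ) : Set C(ℝ, M) :=
  closure {g | ∃ n, s n ≤ a ∧ dist (φ n a) x < ε ∧ g = truncPath (φ n) a b}

/-- `K^{a,b}_x = ⋂_{ε>0} K^{a,b}_{ε,x}`. -/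
def Kx (a b : ℝ) (x : M) : Set C(ℝ, M) := ⋂ ε > (0 : ℝ), Keps s φ a b x ε

/-- `ν^{a,b}_x = #K^{a,b}_x ∈ ℕ ∪ {∞}`. -/
def nu (a b : ℝ) (x : M) : ℕ∞ := (Kx s φ a b x).encard

section

variable {X : Type*} [MetricSpace X]

lemma truncPath_apply (f : C(ℝ, X)) (a b t : ℝ) :
    truncPath f a b t = f (max a (min b t)) := rfl

lemma truncPath_truncPath (f : C(ℝ, X)) {a r t : ℝ} (hrt : r ≤ t) :
    truncPath (truncPath f a t) a r = truncPath f a r := by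
  ext y
  simp only [truncPath_apply]
  congr 1
  grind

lemma truncPath_restrictPath (f : C(ℝ, X)) (a b : ℝ) :
    truncPath (restrictPath f a).2 a b = truncPath f a b := by
  ext y
  simp [truncPath_apply, restrictPath]

lemma continuous_truncPath (a b : ℝ) : Continuous fun g : C(ℝ, X) => truncPath g a b :=
  ContinuousMap.continuous_precomp _

lemma continuous_truncPath_right (f : C(ℝ, X)) (a : ℝ) : Continuous fun b => truncPath f a b :=
  (ContinuousMap.curry ⟨fun p : ℝ × ℝ => f (max a (min p.1 p.2)), by fun_prop⟩).continuous

variable (s : ℕ → ℝ) (φ : ℕ → C(ℝ, X))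

lemma Keps_mono (a b : ℝ) (x : X) {ε ε' : ℝ} (h : ε ≤ ε') :
    Keps s φ a b x ε ⊆ Keps s φ a b x ε' :=
  closure_mono fun _ ⟨n, hn, hd, hg⟩ => ⟨n, hn, hd.trans_le h, hg⟩

lemma truncPath_self_of_mem_Keps {a t ε : ℝ} {x : X} {g : C(ℝ, X)}
    (hg : g ∈ Keps s φ a t x ε) : truncPath g a t = g := by
  have hfix : Keps s φ a t x ε ⊆ {g | truncPath g a t = g} := by
    refine closure_minimal ?_ (isClosed_eq (continuous_truncPath a t) continuous_id)
    rintro _ ⟨n, -, -, rfl⟩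
    exact truncPath_truncPath (φ n) le_rfl
  exact hfix hg

lemma truncPath_mem_Kx {a r t : ℝ} (hrt : r ≤ t) {x : X} {g : C(ℝ, X)}
    (hg : g ∈ Kx s φ a t x) : truncPath g a r ∈ Kx s φ a r x := by
  simp only [Kx, mem_iInter₂] at hg ⊢
  intro ε hε
  refine map_mem_closure (f := fun g => truncPath g a r) (continuous_truncPath a r)
    (hg ε hε) ?_
  rintro _ ⟨n, hn, hd, rfl⟩
  exact ⟨n, hn, hd, truncPath_truncPath (φ n) hrt⟩

lemma isCompact_Keps [ProperSpace X]
    (hSk3 : ∀ L : Set (ℝ × X), IsCompact L →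
      IsCompact (closure {p : ℝ × C(ℝ, X) | ∃ n r, s n ≤ r ∧ (r, φ n r) ∈ L ∧
        p = restrictPath (φ n) r}))
    (a b : ℝ) (x : X) (ε : ℝ) : IsCompact (Keps s φ a b x ε) := by
  have hQ := ((hSk3 ({a} ×ˢ Metric.closedBall x ε)
    (isCompact_singleton.prod (isCompact_closedBall x ε))).image
    continuous_snd).image (continuous_truncPath a b)
  refine hQ.of_isClosed_subset isClosed_closure (closure_minimal ?_ hQ.isClosed)
  rintro _ ⟨n, hn, hd, rfl⟩
  exact ⟨(restrictPath (φ n) a).2, ⟨_, subset_closure ⟨n, a, hn,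
    ⟨rfl, Metric.mem_closedBall.2 hd.le⟩, rfl⟩, rfl⟩, truncPath_restrictPath (φ n) a b⟩

lemma Keps_subset_image_truncPath {a t u ε : ℝ} {x : X} (htu : t ≤ u)
    (hK : IsCompact (Keps s φ a u x ε)) :
    Keps s φ a t x ε ⊆ (fun g => truncPath g a t) '' Keps s φ a u x ε := by
  refine closure_minimal ?_ (hK.image (continuous_truncPath a t)).isClosed
  rintro _ ⟨n, hn, hd, rfl⟩
  exact ⟨_, subset_closure ⟨n, hn, hd, rfl⟩, truncPath_truncPath (φ n) htu⟩

lemma exists_truncPath_eq_of_mem_Kx {a t u : ℝ} {x : X} (htu : t ≤ u)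
    (hK : ∀ ε, IsCompact (Keps s φ a u x ε)) {h : C(ℝ, X)} (hh : h ∈ Kx s φ a t x) :
    ∃ g ∈ Kx s φ a u x, truncPath g a t = h := by
  let fibre : Ioi (0 : ℝ) → Set C(ℝ, X) := fun ε =>
    Keps s φ a u x ε ∩ (fun g => truncPath g a t) ⁻¹' {h}
  have hclosed (ε) : IsClosed (fibre ε) :=
    (hK ε).isClosed.inter (isClosed_singleton.preimage (continuous_truncPath a t))
  have hne (ε : Ioi (0 : ℝ)) : (fibre ε).Nonempty := by
    obtain ⟨g, hg, hgh⟩ :=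
      Keps_subset_image_truncPath s φ htu (hK ε) (mem_iInter₂.1 hh ε ε.2)
    exact ⟨g, hg, hgh⟩
  have hdir : Directed (· ⊇ ·) fibre := fun ε ε' =>
    ⟨⟨min ε ε', lt_min ε.2.out ε'.2.out⟩,
      inter_subset_inter_left _ (Keps_mono s φ a u x (min_le_left _ _)),
      inter_subset_inter_left _ (Keps_mono s φ a u x (min_le_right _ _))⟩
  have : Nonempty (Ioi (0 : ℝ)) := ⟨⟨1, mem_Ioi.2 one_pos⟩⟩
  obtain ⟨g, hg⟩ := IsCompact.nonempty_iInter_of_directed_nonempty_isCompact_isClosed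
    fibre hdir hne (fun ε => (hK ε).of_isClosed_subset (hclosed ε) inter_subset_left) hclosed
  rw [mem_iInter] at hg
  exact ⟨g, mem_iInter₂.2 fun ε hε => (hg ⟨ε, hε⟩).1, (hg ⟨1, mem_Ioi.2 one_pos⟩).2⟩

lemma nu_mono {a t u : ℝ} {x : X} (htu : t ≤ u) (hK : ∀ ε, IsCompact (Keps s φ a u x ε)) :
    nu s φ a t x ≤ nu s φ a u x :=
  calc nu s φ a t x ≤ ((fun g => truncPath g a t) '' Kx s φ a u x).encard :=
        encard_le_encard fun _ hh => exists_truncPath_eq_of_mem_Kx s φ htu hK hh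
    _ ≤ nu s φ a u x := encard_image_le _ _

lemma eventually_injOn_truncPath {a t : ℝ} {x : X} {F : Set C(ℝ, X)} (hF : F.Finite)
    (hFK : F ⊆ Kx s φ a t x) : ∀ᶠ r in nhds t, InjOn (fun g => truncPath g a r) F := by
  have hlim {g} (hg : g ∈ F) : Tendsto (fun r => truncPath g a r) (nhds t) (nhds g) := by
    simpa only [truncPath_self_of_mem_Keps s φ (mem_iInter₂.1 (hFK hg) 1 one_pos)]
      using (continuous_truncPath_right g a).tendsto t
  have hsep : ∀ p ∈ F.offDiag, ∀ᶠ r in nhds t, truncPath p.1 a r ≠ truncPath p.2 a r :=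
    fun p ⟨hp₁, hp₂, hne⟩ => ((hlim hp₁).prodMk_nhds (hlim hp₂)).eventually
      ((isOpen_ne_fun continuous_fst continuous_snd).mem_nhds hne)
  filter_upwards [hF.offDiag.eventually_all.2 hsep] with r hr g hg h hh hgh
  by_contra hne
  exact hr (g, h) ⟨hg, hh, hne⟩ hgh

lemma nu_le_iSup_Ioo {a t : ℝ} (hat : a < t) (x : X) :
    nu s φ a t x ≤ ⨆ r ∈ Ioo a t, nu s φ a r x := by
  refine ENat.forall_natCast_le_iff_le.1 fun n hn => ?_
  obtain ⟨F, hFK, hFn⟩ := exists_subset_encard_eq hn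
  have hnear := (eventually_injOn_truncPath s φ (finite_of_encard_eq_coe hFn) hFK).filter_mono
    (nhdsWithin_le_nhds (s := Iio t))
  obtain ⟨r, hinj, hr⟩ := (hnear.and (Ioo_mem_nhdsLT hat)).exists
  calc (n : ℕ∞) = ((fun g => truncPath g a r) '' F).encard := by rw [hinj.encard_image, hFn]
    _ ≤ nu s φ a r x := encard_le_encard (image_subset_iff.2 fun g hg =>
        truncPath_mem_Kx s φ hr.2.le (hFK hg))
    _ ≤ ⨆ r ∈ Ioo a t, nu s φ a r x := le_iSup₂ (f := fun r _ => nu s φ a r x) r hr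

end

theorem nu_monotone_leftContinuous
    (hSk3 : ∀ L : Set (ℝ × M), IsCompact L →
      IsCompact (closure {p : ℝ × C(ℝ, M) | ∃ n r, s n ≤ r ∧ (r, φ n r) ∈ L ∧
        p = restrictPath (φ n) r})) :
    ∀ (a : ℝ) (x : M),
      (∀ t u : ℝ, a < t → t ≤ u → nu s φ a t x ≤ nu s φ a u x) ∧
      (∀ t : ℝ, a < t → nu s φ a t x = ⨆ r ∈ Set.Ioo a t, nu s φ a r x) := by
  intro a x
  have hK (u ε) := isCompact_Keps s φ hSk3 a u x ε
  refine ⟨fun t u _ htu => nu_mono s φ htu (hK u), fun t hat => ?_⟩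
  exact le_antisymm (nu_le_iSup_Ioo s φ hat x)
    (iSup₂_le fun r hr => nu_mono s φ hr.2.le (hK t))

end
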